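/- arXiv:2408.00751 — 2 statements merged into one kernel-verified Lean document; each statement's English description precedes it below -/
import Mathlib

section
/- Let C be a convex set, ψ a differentiable strongly convex function on C, g a vector, η > 0, τ₀ ≥ 0, and x⁽¹⁾ = argmin_{x∈C} { ⟨g,x⟩ + τ₀ψ(x) + (1/η)D_ψ(x, x⁽⁰⁾) }. Then for any x⁽²⁾ ∈ C: ητ₀ψ(x⁽¹⁾) − ητ₀ψ(x⁽²⁾) + η⟨g, x⁽¹⁾ − x⁽²⁾⟩ ≤ D_ψ(x⁽²⁾, x⁽⁰⁾) − (1+ητ₀)D_ψ(x⁽²⁾, x⁽¹⁾) − D_ψ(x⁽¹⁾, x⁽⁰⁾). -/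
/-!
At `x1` the objective `x ↦ ⟪g, x⟫ + τ₀ ψ x + η⁻¹ D(x, x0)` has gradient
`g + τ₀ ψ'(x1) + η⁻¹ (ψ'(x1) - ψ'(x0))`, so minimality on the convex set `C` gives the
variational inequality `0 ≤ ⟪g + τ₀ ψ'(x1) + η⁻¹ (ψ'(x1) - ψ'(x0)), x2 - x1⟫`.
Multiplying by `η`, the three-point identity
`D(z, x) - D(z, y) - D(y, x) = ⟪ψ'(y) - ψ'(x), z - y⟫` and
`⟪ψ'(x1), x2 - x1⟫ = ψ(x2) - ψ(x1) - D(x2, x1)` turn it into the claimed inequality.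
-/

open scoped RealInnerProductSpace

variable {F : Type*} [NormedAddCommGroup F] [InnerProductSpace ℝ F]

section Gradient

variable [CompleteSpace F] {f h : F → ℝ} {f' h' x : F}

theorem hasGradientAt_inner_right (v x : F) : HasGradientAt (fun y => ⟪v, y⟫) v x := by
  rw [hasGradientAt_iff_hasFDerivAt]
  exact (innerSL ℝ v).hasFDerivAt

theorem HasGradientAt.add (hf : HasGradientAt f f' x) (hh : HasGradientAt h h' x) :
    HasGradientAt (fun y => f y + h y) (f' + h') x := by
  rw [hasGradientAt_iff_hasFDerivAt, map_add]
  exact HasFDerivAt.add hf hh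

theorem HasGradientAt.sub (hf : HasGradientAt f f' x) (hh : HasGradientAt h h' x) :
    HasGradientAt (fun y => f y - h y) (f' - h') x := by
  rw [hasGradientAt_iff_hasFDerivAt, map_sub]
  exact HasFDerivAt.sub hf hh

theorem HasGradientAt.const_mul (hf : HasGradientAt f f' x) (c : ℝ) :
    HasGradientAt (fun y => c * f y) (c • f') x := by
  rw [hasGradientAt_iff_hasFDerivAt, map_smul]
  exact HasFDerivAt.const_mul hf c

theorem IsMinOn.inner_gradient_nonneg {s : Set F} {a y : F} (hs : Convex ℝ s)
    (hmin : IsMinOn f s a) (ha : a ∈ s) (hf : HasGradientAt f f' a) (hy : y ∈ s) :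
    0 ≤ ⟪f', y - a⟫ := by
  simpa using hmin.localize.hasFDerivWithinAt_nonneg hf.hasFDerivAt.hasFDerivWithinAt
    (sub_mem_posTangentConeAt_of_segment_subset (hs.segment_subset ha hy))

end Gradient

section Bregman

def bregmanDiv (ψ : F → ℝ) (ψ' : F → F) (x y : F) : ℝ :=
  ψ x - ψ y - ⟪ψ' y, x - y⟫

variable {ψ : F → ℝ} {ψ' : F → F}

theorem bregmanDiv_sub_bregmanDiv_sub_bregmanDiv (x y z : F) :
    bregmanDiv ψ ψ' z x - bregmanDiv ψ ψ' z y - bregmanDiv ψ ψ' y x = ⟪ψ' y - ψ' x, z - y⟫ := by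
  simp only [bregmanDiv, inner_sub_left, inner_sub_right]
  ring

theorem inner_sub_eq_sub_sub_bregmanDiv (x y : F) :
    ⟪ψ' y, x - y⟫ = ψ x - ψ y - bregmanDiv ψ ψ' x y := by
  rw [bregmanDiv]; ring

theorem hasGradientAt_bregmanDiv_left [CompleteSpace F] {x y : F}
    (hψ : HasGradientAt ψ (ψ' x) x) :
    HasGradientAt (fun z => bregmanDiv ψ ψ' z y) (ψ' x - ψ' y) x := by
  convert (hψ.sub (hasGradientAt_const x (ψ y))).sub (hasGradientAt_inner_right (ψ' y) x)
    |>.sub (hasGradientAt_const x ⟪ψ' y, -y⟫) using 1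
  · funext z
    simp only [bregmanDiv, inner_sub_right, inner_neg_right]
    ring
  · simp

end Bregman

theorem bregmanDiv_proximal_step_le [CompleteSpace F] {ψ : F → ℝ} {ψ' : F → F} {C : Set F}
    (hC : Convex ℝ C) {g x0 x1 x2 : F} {η τ₀ : ℝ} (hη : 0 < η) (hx1 : x1 ∈ C) (hx2 : x2 ∈ C)
    (hψ : HasGradientAt ψ (ψ' x1) x1)
    (hmin : IsMinOn (fun x => ⟪g, x⟫ + τ₀ * ψ x + (1 / η) * bregmanDiv ψ ψ' x x0) C x1) :
    η * τ₀ * ψ x1 - η * τ₀ * ψ x2 + η * ⟪g, x1 - x2⟫ ≤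
      bregmanDiv ψ ψ' x2 x0 - (1 + η * τ₀) * bregmanDiv ψ ψ' x2 x1 - bregmanDiv ψ ψ' x1 x0 := by
  have hopt := hmin.inner_gradient_nonneg hC hx1 (((hasGradientAt_inner_right g x1).add
    (hψ.const_mul τ₀)).add ((hasGradientAt_bregmanDiv_left hψ).const_mul (1 / η))) hx2
  rw [inner_add_left, inner_add_left, real_inner_smul_left, real_inner_smul_left,
    ← bregmanDiv_sub_bregmanDiv_sub_bregmanDiv (ψ := ψ),
    inner_sub_eq_sub_sub_bregmanDiv (ψ := ψ)] at hopt
  have hg : ⟪g, x1 - x2⟫ = -⟪g, x2 - x1⟫ := by rw [← inner_neg_right, neg_sub]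
  rw [hg]
  have := mul_nonneg hη.le hopt
  field_simp at this
  linarith

theorem stmt6_general {n : ℕ} (C : Set (EuclideanSpace ℝ (Fin n))) (hC : Convex ℝ C)
    (ψ : EuclideanSpace ℝ (Fin n) → ℝ)
    (ψ' : EuclideanSpace ℝ (Fin n) → EuclideanSpace ℝ (Fin n))
    (hgrad : ∀ x, HasGradientAt ψ (ψ' x) x)
    (g x0 x1 : EuclideanSpace ℝ (Fin n)) (η τ₀ : ℝ) (hη : 0 < η)
    (hx1 : x1 ∈ C)
    (D : EuclideanSpace ℝ (Fin n) → EuclideanSpace ℝ (Fin n) → ℝ)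
    (hD : ∀ x y, D x y = ψ x - ψ y - ⟪ψ' y, x - y⟫)
    (hmin : ∀ x ∈ C, ⟪g, x1⟫ + τ₀ * ψ x1 + (1 / η) * D x1 x0 ≤
      ⟪g, x⟫ + τ₀ * ψ x + (1 / η) * D x x0) :
    ∀ x2 ∈ C, η * τ₀ * ψ x1 - η * τ₀ * ψ x2 + η * ⟪g, x1 - x2⟫ ≤
      D x2 x0 - (1 + η * τ₀) * D x2 x1 - D x1 x0 := by
  obtain rfl : D = bregmanDiv ψ ψ' := funext fun x => funext (hD x)
  intro x2 hx2
  exact bregmanDiv_proximal_step_le hC hη hx1 hx2 (hgrad x1) (isMinOn_iff.mpr hmin)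

/-- Fundamental inequality for the regularized mirror-descent step. -/
theorem stmt6 {n : ℕ} (C : Set (EuclideanSpace ℝ (Fin n))) (hC : Convex ℝ C)
    (ψ : EuclideanSpace ℝ (Fin n) → ℝ)
    (ψ' : EuclideanSpace ℝ (Fin n) → EuclideanSpace ℝ (Fin n))
    (hgrad : ∀ x, HasGradientAt ψ (ψ' x) x)
    (c : ℝ) (hc : 0 < c)
    (hsc : ∀ x y, ψ y + ⟪ψ' y, x - y⟫ + c / 2 * ‖x - y‖ ^ 2 ≤ ψ x)
    (g x0 x1 : EuclideanSpace ℝ (Fin n)) (η τ₀ : ℝ) (hη : 0 < η) (hτ : 0 ≤ τ₀)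
    (hx0 : x0 ∈ C) (hx1 : x1 ∈ C)
    (D : EuclideanSpace ℝ (Fin n) → EuclideanSpace ℝ (Fin n) → ℝ)
    (hD : ∀ x y, D x y = ψ x - ψ y - ⟪ψ' y, x - y⟫)
    (hmin : ∀ x ∈ C, ⟪g, x1⟫ + τ₀ * ψ x1 + (1 / η) * D x1 x0 ≤
      ⟪g, x⟫ + τ₀ * ψ x + (1 / η) * D x x0) :
    ∀ x2 ∈ C, η * τ₀ * ψ x1 - η * τ₀ * ψ x2 + η * ⟪g, x1 - x2⟫ ≤
      D x2 x0 - (1 + η * τ₀) * D x2 x1 - D x1 x0 :=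
  stmt6_general C hC ψ ψ' hgrad g x0 x1 η τ₀ hη hx1 D hD hmin
end

section
/- For probability vectors x, x̂ ∈ Δⁿ with x ⪰ γ entrywise (γ ∈ (0,1)), the negative-entropy difference satisfies |∑ₐ xₐ log xₐ − ∑ₐ x̂ₐ log x̂ₐ| ≤ log(1/γ)·‖x − x̂‖₁ + KL(x̂‖x), where KL(x̂‖x) = ∑ₐ x̂ₐ log(x̂ₐ/xₐ). -/
/-!
Pointwise, `x log x - x̂ log x̂ = (x - x̂) log x - x̂ log (x̂ / x)`, so the entropy difference is a
linear term `⟨x - x̂, log x⟩` minus `KL(x̂ ‖ x)`. The linear term is bounded by Hölder's inequality,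
since `γ ≤ x ≤ 1` gives `|log x| ≤ log (1 / γ)`, and the KL term is nonnegative (Gibbs).
-/

open Finset Real InformationTheory

lemma mul_log_sub_mul_log_eq {p q : ℝ} (hp : 0 < p) (hq : 0 ≤ q) :
    p * log p - q * log q = (p - q) * log p - q * log (q / p) := by
  rcases hq.eq_or_lt with rfl | hq
  · simp
  · rw [log_div hq.ne' hp.ne']
    ring

lemma sub_le_mul_log_div {p q : ℝ} (hp : 0 < p) (hq : 0 ≤ q) : q - p ≤ q * log (q / p) := by
  have hkl : p * klFun (q / p) = q * log (q / p) + p - q := by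
    rw [klFun_apply]
    field_simp
  linarith [mul_nonneg hp.le (klFun_nonneg (div_nonneg hq hp.le))]

lemma abs_log_le_log_one_div {γ t : ℝ} (hγ : 0 < γ) (hγt : γ ≤ t) (ht : t ≤ 1) :
    |log t| ≤ log (1 / γ) := by
  rw [abs_of_nonpos (log_nonpos (hγ.trans_le hγt).le ht), one_div, log_inv]
  exact neg_le_neg (log_le_log hγ hγt)

section Finset

variable {ι : Type*} {s : Finset ι} {p q : ι → ℝ}

lemma sum_mul_log_sub_sum_mul_log (hp : ∀ a ∈ s, 0 < p a) (hq : ∀ a ∈ s, 0 ≤ q a) :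
    ∑ a ∈ s, p a * log (p a) - ∑ a ∈ s, q a * log (q a) =
      ∑ a ∈ s, (p a - q a) * log (p a) - ∑ a ∈ s, q a * log (q a / p a) := by
  simp only [← sum_sub_distrib]
  exact sum_congr rfl fun a ha => mul_log_sub_mul_log_eq (hp a ha) (hq a ha)

lemma sum_mul_log_div_nonneg (hp : ∀ a ∈ s, 0 < p a) (hq : ∀ a ∈ s, 0 ≤ q a)
    (hsum : ∑ a ∈ s, q a = ∑ a ∈ s, p a) : 0 ≤ ∑ a ∈ s, q a * log (q a / p a) :=
  calc (0 : ℝ) = ∑ a ∈ s, (q a - p a) := by rw [sum_sub_distrib, hsum, sub_self]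
    _ ≤ ∑ a ∈ s, q a * log (q a / p a) :=
        sum_le_sum fun a ha => sub_le_mul_log_div (hp a ha) (hq a ha)

lemma abs_sum_mul_le_of_abs_le {C : ℝ} (h : ∀ a ∈ s, |q a| ≤ C) :
    |∑ a ∈ s, p a * q a| ≤ C * ∑ a ∈ s, |p a| :=
  calc |∑ a ∈ s, p a * q a| ≤ ∑ a ∈ s, |p a| * |q a| := by
        simpa only [abs_mul] using abs_sum_le_sum_abs (fun a => p a * q a) s
    _ ≤ ∑ a ∈ s, |p a| * C := sum_le_sum fun a ha => by gcongr; exact h a ha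
    _ = C * ∑ a ∈ s, |p a| := by rw [← sum_mul, mul_comm]

end Finset

theorem stmt11_general {n : ℕ} (x xh : Fin n → ℝ) (γ : ℝ) (hγ0 : 0 < γ)
    (hx0 : ∀ a, γ ≤ x a) (hxs : ∑ a, x a = 1)
    (hxh0 : ∀ a, 0 ≤ xh a) (hxhs : ∑ a, xh a = 1) :
    |(∑ a, x a * Real.log (x a)) - ∑ a, xh a * Real.log (xh a)| ≤
      Real.log (1 / γ) * (∑ a, |x a - xh a|) +
        ∑ a, xh a * Real.log (xh a / x a) := by
  have hxpos : ∀ a ∈ univ, 0 < x a := fun a _ => hγ0.trans_le (hx0 a)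
  have hxh0' : ∀ a ∈ univ, 0 ≤ xh a := fun a _ => hxh0 a
  have hx1 (a : Fin n) : x a ≤ 1 :=
    hxs ▸ single_le_sum (fun b hb => (hxpos b hb).le) (mem_univ a)
  have hkl := sum_mul_log_div_nonneg hxpos hxh0' (hxhs.trans hxs.symm)
  have hlin : |∑ a, (x a - xh a) * log (x a)| ≤ log (1 / γ) * ∑ a, |x a - xh a| :=
    abs_sum_mul_le_of_abs_le fun a _ => abs_log_le_log_one_div hγ0 (hx0 a) (hx1 a)
  rw [sum_mul_log_sub_sum_mul_log hxpos hxh0']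
  refine (abs_sub _ _).trans ?_
  rw [abs_of_nonneg hkl]
  exact add_le_add_left hlin _

/-- Negative entropy difference bound on a γ-truncated simplex. -/
theorem stmt11 {n : ℕ} (x xh : Fin n → ℝ) (γ : ℝ) (hγ0 : 0 < γ) (hγ1 : γ < 1)
    (hx0 : ∀ a, γ ≤ x a) (hxs : ∑ a, x a = 1)
    (hxh0 : ∀ a, 0 ≤ xh a) (hxhs : ∑ a, xh a = 1) :
    |(∑ a, x a * Real.log (x a)) - ∑ a, xh a * Real.log (xh a)| ≤
      Real.log (1 / γ) * (∑ a, |x a - xh a|) +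
        ∑ a, xh a * Real.log (xh a / x a) :=
  stmt11_general x xh γ hγ0 hx0 hxs hxh0 hxhs
end
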